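/- Let p ∈ (0,1) and set |ψ₀⟩ = √p |0⟩ + √(1−p) |1⟩ and |ψ₁⟩ = √p |0⟩ − √(1−p) |1⟩, with ρ₀ = |ψ₀⟩⟨ψ₀| and ρ₁ = |ψ₁⟩⟨ψ₁|. Then for every n ≥ 1, the ℤ₂-twirlings of the n-fold tensor powers coincide: Z[ρ₀^{⊗n}] = Z[ρ₁^{⊗n}]. -/
import Mathlib


open Matrix Complex Set Filter

noncomputable section

/-- Number of 1s in a bit string. -/
def ones {n : ℕ} (x : Fin n → Fin 2) : ℕ := (Finset.univ.filter fun i => x i = 1).card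

/-- The `n`-fold tensor power of a one-qubit operator, as a matrix indexed by bit strings. -/
def mpow (n : ℕ) (ρ : Matrix (Fin 2) (Fin 2) ℂ) :
    Matrix (Fin n → Fin 2) (Fin n → Fin 2) ℂ :=
  Matrix.of fun x y => ∏ i, ρ (x i) (y i)

/-- The parity operator ω = σ_z^{⊗n}: it multiplies a computational basis vector by
(-1)^(number of 1s). -/
def parityOp (n : ℕ) : Matrix (Fin n → Fin 2) (Fin n → Fin 2) ℂ :=
  Matrix.diagonal fun x => (-1 : ℂ) ^ ones x

/-- The ℤ₂-twirling Z[X] = ½ (X + ωXω). -/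
def twirl {n : ℕ} (X : Matrix (Fin n → Fin 2) (Fin n → Fin 2) ℂ) :
    Matrix (Fin n → Fin 2) (Fin n → Fin 2) ℂ :=
  (2 : ℂ)⁻¹ • (X + parityOp n * X * parityOp n)

/-- Rank-one projection |ψ⟩⟨ψ| on one qubit. -/
def projv (ψ : Fin 2 → ℂ) : Matrix (Fin 2) (Fin 2) ℂ := vecMulVec ψ (star ψ)

/-- Rank-one projection |ψ⟩⟨ψ| on n qubits. -/
def projN {n : ℕ} (ψ : (Fin n → Fin 2) → ℂ) :
    Matrix (Fin n → Fin 2) (Fin n → Fin 2) ℂ := vecMulVec ψ (star ψ)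

def ket0 : Fin 2 → ℂ := ![1, 0]

def ket1 : Fin 2 → ℂ := ![0, 1]

/-- The qubit state √p |0⟩ + e^{iφ} √(1-p) |1⟩. -/
def qubit (p φ : ℝ) : Fin 2 → ℂ :=
  ![(Real.sqrt p : ℂ), Complex.exp (Complex.I * φ) * (Real.sqrt (1 - p) : ℂ)]

/-- The qubit state √p |0⟩ + √(1-p) |1⟩. -/
def qubitR (p : ℝ) : Fin 2 → ℂ := ![(Real.sqrt p : ℂ), (Real.sqrt (1 - p) : ℂ)]

/-- For p ∈ (0,1), |ψ₀⟩ = √p|0⟩ + √(1-p)|1⟩ and |ψ₁⟩ = √p|0⟩ − √(1-p)|1⟩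
have equal ℤ₂-twirlings of all n-fold tensor powers, n ≥ 1. -/
theorem z2_twirl_plus_minus_eq (p : ℝ) (hp : p ∈ Set.Ioo (0 : ℝ) 1) (n : ℕ) (hn : 1 ≤ n) :
    twirl (mpow n (projv ![(Real.sqrt p : ℂ), (Real.sqrt (1 - p) : ℂ)])) =
    twirl (mpow n (projv ![(Real.sqrt p : ℂ), -(Real.sqrt (1 - p) : ℂ)])) := by
  set ψ₀ : Fin 2 → ℂ := ![(Real.sqrt p : ℂ), (Real.sqrt (1 - p) : ℂ)]
  set ψ₁ : Fin 2 → ℂ := ![(Real.sqrt p : ℂ), -(Real.sqrt (1 - p) : ℂ)]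
  have hsign : ∀ x : Fin n → Fin 2,
      (-1 : ℂ) ^ ones x = ∏ i, (-1 : ℂ) ^ ((x i : ℕ)) := by
    intro x
    rw [Finset.prod_pow_eq_pow_sum]
    congr 1
    unfold ones
    rw [Finset.card_eq_sum_ones, Finset.sum_filter]
    apply Finset.sum_congr rfl
    intro i _
    have : ∀ j : Fin 2, (j : ℕ) = if j = 1 then 1 else 0 := by decide
    rw [this (x i)]
  have hentry : ∀ i j : Fin 2,
      projv ψ₁ i j = (-1 : ℂ) ^ (i : ℕ) * (-1 : ℂ) ^ (j : ℕ) * projv ψ₀ i j := by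
    intro i j
    fin_cases i <;> fin_cases j <;>
      simp [projv, ψ₀, ψ₁, vecMulVec, Pi.star_apply] <;> ring
  have hB : ∀ x y : Fin n → Fin 2,
      mpow n (projv ψ₁) x y =
        (-1 : ℂ) ^ ones x * (-1 : ℂ) ^ ones y * mpow n (projv ψ₀) x y := by
    intro x y
    simp only [mpow, Matrix.of_apply]
    rw [hsign x, hsign y, ← Finset.prod_mul_distrib, ← Finset.prod_mul_distrib]
    exact Finset.prod_congr rfl fun i _ => hentry (x i) (y i)
  ext x y
  have hsq : ((-1 : ℂ) ^ ones x * (-1 : ℂ) ^ ones y) *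
      ((-1 : ℂ) ^ ones x * (-1 : ℂ) ^ ones y) = 1 := by
    rw [mul_mul_mul_comm, ← sq, ← sq, ← pow_mul, ← pow_mul,
      mul_comm (ones x), mul_comm (ones y), pow_mul, pow_mul, neg_one_sq, one_pow, one_pow, one_mul]
  simp only [twirl, parityOp, Matrix.smul_apply, Matrix.add_apply,
    Matrix.diagonal_mul, Matrix.mul_diagonal, smul_eq_mul]
  rw [hB x y]
  set ε := (-1 : ℂ) ^ ones x * (-1 : ℂ) ^ ones y with hε
  set A := mpow n (projv ψ₀) x y
  have : (-1 : ℂ) ^ ones x * (ε * A) * (-1 : ℂ) ^ ones y = ε * ε * A := by ring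
  rw [this, hsq]
  have : (-1 : ℂ) ^ ones x * A * (-1 : ℂ) ^ ones y = ε * A := by rw [hε]; ring
  rw [this]
  ring
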